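/- arXiv:math/9803018 — 3 statements merged into one kernel-verified Lean document; each statement's English description precedes it below -/
import Mathlib

section
/- Let f be a field of characteristic 0, λ ∈ f with λ ≠ 0, and let m ≥ k−1 ≥ 0 be integers (k ≥ 1). Then in f[x_0, …, x_{m+k}] one has P^{(−1/λ)}_{mk}(x_0,…,x_{m+k}) = (1/((k−1)!·(−λ)^k)) · det M, where M is the k×k matrix whose first row is (x_{m+1}, x_{m+2}, …, x_{m+k}) and whose remaining k−1 rows are the rows of the matrix A(λ,k). -/
open scoped Classical

noncomputable section

/-- The generalized multinomial coefficient `(c choose p₁,…,p_{m+k})` attached to a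
partition `π` of `n`: numerator `c(c−1)⋯(c−ℓ(π)+1)`, denominator `∏ pᵢ!`. -/
def partMultCoeff {f : Type*} [Field f] (c : f) {n : ℕ} (π : Nat.Partition n) : f :=
  (∏ j ∈ Finset.range (Multiset.card π.parts), (c - j)) /
    ∏ i ∈ Finset.Icc 1 n, ((π.parts.count i).factorial : f)

/-- The polynomial `P^{(c)}_{mk} = Σ_π (c choose p₁,…,p_{m+k}) x₀^{p₀} x₁^{p₁} ⋯`,
summed over partitions `π = (1^{p₁} 2^{p₂} ⋯)` of `m+k` with largest part `> m`,
where `p₀ = k − ℓ(π)`. -/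
def Ppoly (f : Type*) [Field f] (c : f) (m k : ℕ) : MvPolynomial ℕ f :=
  ∑ π ∈ Finset.univ.filter (fun π : Nat.Partition (m + k) => ∃ a ∈ π.parts, m < a),
    MvPolynomial.C (partMultCoeff c π) * MvPolynomial.X 0 ^ (k - Multiset.card π.parts) *
      ∏ i ∈ Finset.Icc 1 (m + k), MvPolynomial.X i ^ (π.parts.count i)

/-- The entry of the matrix `A(λ,k)` in (1-based) row `r`, column `s`:
`((k−r)λ + (s−r))·x_{s−r}` if `s ≥ r`, and `0` otherwise. -/
def Aent {f : Type*} [Field f] (lam : f) (k r s : ℕ) : MvPolynomial ℕ f :=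
  if r ≤ s then
    MvPolynomial.C (((k - r : ℕ) : f) * lam + ((s - r : ℕ) : f)) * MvPolynomial.X (s - r)
  else 0

/-!
Expanding `det M` along its first column expresses it through the determinants `W_n` of
`A(λ, n+1)` with the first column deleted: the cofactor of `x_{m+1+i}` is
`(-λ)^i (k-1)!/(k-1-i)! · x₀^i · W_{k-1-i}`. Expanding `W_{n+1}` the same way shows that
`W_n / (n! (-λ)^n)` satisfies J. C. P. Miller's recurrence
`n R_n = ∑_j ((d+1) j - n) x₀^{j-1} x_j R_{n-j}`, `d = -1/λ - 1`, for the (homogenised)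
potential polynomials `R_n` of exponent `d`. On the other side, since `m ≥ k - 1`, every partition
in `P_{mk}` has exactly one part `m+1+i > m`, and removing it gives
`P_{mk} = c ∑_i x₀^i x_{m+1+i} R_{k-1-i}` with `c = -1/λ`. Miller's recurrence itself is proved
on partitions, from `n = ∑_j j p_j` and by removing first one and then a second part: the terms
left over cancel under exchanging the two removed parts.
-/

open Finset MvPolynomial

theorem Finset.sum_sum_sub_mul_eq_zero {ι R : Type*} [CommRing R] (s : Finset ι) (a : ι → R)
    (S : ι → ι → R) (hS : ∀ i j, S i j = S j i) :
    ∑ j ∈ s, ∑ i ∈ s, (a i - a j) * S i j = 0 := by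
  simp only [sub_mul, sum_sub_distrib]
  rw [sub_eq_zero, sum_comm]
  simp only [hS]

theorem descPochhammer_eval_mul_sub {R : Type*} [CommRing R] (d : R) (l : ℕ) :
    (descPochhammer R l).eval d * (d - l) = d * (descPochhammer R l).eval (d - 1) := by
  rw [← descPochhammer_succ_eval, descPochhammer_succ_left, Polynomial.eval_mul,
    Polynomial.eval_comp]
  simp

def countFactorial {α : Type*} [DecidableEq α] (μ : Multiset α) : ℕ :=
  ∏ a ∈ μ.toFinset, (μ.count a).factorial

section CountFactorial

variable {α : Type*} [DecidableEq α]

theorem prod_count_factorial_eq_countFactorial {μ : Multiset α} {s : Finset α}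
    (hs : μ.toFinset ⊆ s) : ∏ a ∈ s, (μ.count a).factorial = countFactorial μ :=
  (prod_subset hs fun a _ ha => by rw [Multiset.count_eq_zero.2 (by simpa using ha)]; rfl).symm

theorem countFactorial_cons (a : α) (μ : Multiset α) :
    countFactorial (a ::ₘ μ) = (μ.count a + 1) * countFactorial μ := by
  have hsub : μ.toFinset ⊆ (a ::ₘ μ).toFinset := by simp [Finset.subset_insert]
  have ha : a ∈ (a ::ₘ μ).toFinset := by simp
  rw [countFactorial, ← prod_count_factorial_eq_countFactorial hsub, ← mul_prod_erase _ _ ha,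
    ← mul_prod_erase _ _ ha, Multiset.count_cons_self, Nat.factorial_succ, mul_assoc]
  congr 2
  refine prod_congr rfl fun b hb => ?_
  rw [Multiset.count_cons_of_ne (ne_of_mem_erase hb)]

end CountFactorial

def partitionsFinset (n : ℕ) : Finset (Multiset ℕ) :=
  (univ : Finset (Nat.Partition n)).map ⟨Nat.Partition.parts, fun _ _ => Nat.Partition.ext⟩

section Partitions

variable {n : ℕ} {μ : Multiset ℕ}

theorem mem_partitionsFinset : μ ∈ partitionsFinset n ↔ (∀ i ∈ μ, 0 < i) ∧ μ.sum = n := by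
  simp only [partitionsFinset, mem_map, mem_univ, true_and]
  constructor
  · rintro ⟨π, rfl⟩
    exact ⟨fun i hi => π.parts_pos hi, π.parts_sum⟩
  · rintro ⟨hpos, hsum⟩
    exact ⟨⟨μ, hpos _, hsum⟩, rfl⟩

theorem le_of_mem_partitionsFinset (hμ : μ ∈ partitionsFinset n) {a : ℕ} (ha : a ∈ μ) : a ≤ n :=
  (mem_partitionsFinset.1 hμ).2 ▸ Multiset.le_sum_of_mem ha

theorem card_le_of_mem_partitionsFinset (hμ : μ ∈ partitionsFinset n) : Multiset.card μ ≤ n := by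
  obtain ⟨hpos, hsum⟩ := mem_partitionsFinset.1 hμ
  simpa [hsum] using Multiset.card_nsmul_le_sum (s := μ) hpos

theorem partitionsFinset_zero : partitionsFinset 0 = {0} := by
  ext μ
  simp only [mem_partitionsFinset, mem_singleton, Multiset.sum_eq_zero_iff]
  refine ⟨fun ⟨hpos, hzero⟩ => Multiset.eq_zero_of_forall_notMem fun i hi => ?_, ?_⟩
  · exact (hpos i hi).ne' (hzero i hi)
  · rintro rfl
    simp

theorem toFinset_subset_Icc_of_mem_partitionsFinset (hμ : μ ∈ partitionsFinset n) :
    μ.toFinset ⊆ Icc 1 n := fun i hi => by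
  rw [Multiset.mem_toFinset] at hi
  exact mem_Icc.2 ⟨(mem_partitionsFinset.1 hμ).1 i hi, le_of_mem_partitionsFinset hμ hi⟩

theorem image_cons_partitionsFinset {j : ℕ} (hj : 1 ≤ j) (hjn : j ≤ n) :
    (partitionsFinset (n - j)).image (j ::ₘ ·) = (partitionsFinset n).filter (j ∈ ·) := by
  ext μ
  simp only [mem_image, mem_filter, mem_partitionsFinset]
  constructor
  · rintro ⟨ν, ⟨hpos, hsum⟩, rfl⟩
    refine ⟨⟨fun i hi => ?_, by simp [hsum, hjn]⟩, Multiset.mem_cons_self _ _⟩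
    rcases Multiset.mem_cons.1 hi with rfl | hi
    exacts [hj, hpos i hi]
  · rintro ⟨⟨hpos, hsum⟩, hjμ⟩
    refine ⟨μ.erase j, ⟨fun i hi => hpos i (Multiset.mem_of_mem_erase hi), ?_⟩,
      Multiset.cons_erase hjμ⟩
    have := Multiset.sum_erase hjμ
    omega

theorem sum_Icc_count_smul {M : Type*} [AddCommMonoid M] (hμ : μ ∈ partitionsFinset n) {N : ℕ}
    (hn : n ≤ N) (g : ℕ → M) : ∑ i ∈ Icc 1 N, μ.count i • g i = (μ.map g).sum := by
  rw [Finset.sum_multiset_map_count]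
  refine (sum_subset ((toFinset_subset_Icc_of_mem_partitionsFinset hμ).trans
    (Icc_subset_Icc_right hn)) fun i _ hi => ?_).symm
  rw [Multiset.count_eq_zero.2 (by simpa using hi), zero_smul]

theorem sum_range_count_eq_ite {m k : ℕ} (hkm : k ≤ m + 1)
    (hμ : μ ∈ partitionsFinset (m + k)) :
    ∑ i ∈ range k, μ.count (m + 1 + i) = if ∃ a ∈ μ, m < a then 1 else 0 := by
  split_ifs with h
  · obtain ⟨a, ha, hma⟩ := h
    have hsum := Multiset.sum_erase ha
    rw [(mem_partitionsFinset.1 hμ).2] at hsum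
    have hrest : ∀ i, (μ.erase a).count (m + 1 + i) = 0 := fun i =>
      Multiset.count_eq_zero.2 fun hi => by
        have := Multiset.le_sum_of_mem hi
        omega
    have ham := le_of_mem_partitionsFinset hμ ha
    rw [← Multiset.cons_erase ha]
    simp only [Multiset.count_cons, hrest, zero_add]
    rw [sum_eq_single_of_mem (a - (m + 1)) (mem_range.2 (by omega)) fun i _ hi => if_neg (by omega),
      if_pos (by omega)]
  · push Not at h
    exact sum_eq_zero fun i _ => Multiset.count_eq_zero.2 fun hi => by
      have := h _ hi
      omega

end Partitions

section PotentialPoly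

variable {F : Type*} [Field F]

def partWeight (μ : Multiset ℕ) : MvPolynomial ℕ F :=
  C ((countFactorial μ : F)⁻¹) * (μ.map X).prod

def pochMonomial (d : F) (e : ℕ) (μ : Multiset ℕ) : MvPolynomial ℕ F :=
  C ((descPochhammer F (Multiset.card μ)).eval d) * X 0 ^ (e - Multiset.card μ)

/-- Comtet's potential polynomial, made homogeneous: `x₀^{n-d}` times the coefficient of `tⁿ`
in `(x₀ + x₁t + x₂t² + ⋯)^d`. -/
def potentialPoly (d : F) (n : ℕ) : MvPolynomial ℕ F :=
  ∑ μ ∈ partitionsFinset n, pochMonomial d n μ * partWeight μ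

def twoPartSum (d : F) (n i j : ℕ) : MvPolynomial ℕ F :=
  if i + j ≤ n then
    ∑ σ ∈ partitionsFinset (n - (i + j)),
      pochMonomial d (n - 1) (i ::ₘ σ) * (X i * X j * partWeight σ)
  else 0

theorem potentialPoly_zero (d : F) : potentialPoly d 0 = 1 := by
  simp [potentialPoly, partitionsFinset_zero, pochMonomial, partWeight, countFactorial]

theorem pochMonomial_cons (d : F) (e a : ℕ) (ν : Multiset ℕ) :
    pochMonomial d e (a ::ₘ ν) =
      C ((descPochhammer F (Multiset.card ν)).eval d * (d - Multiset.card ν)) *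
        X 0 ^ (e - (Multiset.card ν + 1)) := by
  rw [pochMonomial, Multiset.card_cons, descPochhammer_succ_eval]

theorem twoPartSum_comm (d : F) (n i j : ℕ) : twoPartSum d n i j = twoPartSum d n j i := by
  simp only [twoPartSum, add_comm i j, mul_comm (X i), pochMonomial_cons]

theorem Ppoly_eq_sum_partitionsFinset (c : F) (m k : ℕ) :
    Ppoly F c m k = ∑ μ ∈ (partitionsFinset (m + k)).filter (fun μ => ∃ a ∈ μ, m < a),
      pochMonomial c k μ * partWeight μ := by
  rw [Ppoly, partitionsFinset, filter_map, sum_map]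
  refine sum_congr rfl fun π _ => ?_
  have hπ : π.parts ∈ partitionsFinset (m + k) := mem_map_of_mem _ (mem_univ π)
  have hsub := toFinset_subset_Icc_of_mem_partitionsFinset hπ
  change _ = pochMonomial c k π.parts * partWeight π.parts
  rw [partMultCoeff, pochMonomial, partWeight, ← prod_count_factorial_eq_countFactorial hsub,
    Finset.prod_multiset_map_count, prod_subset hsub fun i _ hi => by
      rw [Multiset.count_eq_zero.2 (by simpa using hi), pow_zero],
    ← descPochhammer_eval_eq_prod_range, Nat.cast_prod, div_eq_mul_inv, map_mul]
  ring

variable [CharZero F]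

theorem count_mul_partWeight_cons (j : ℕ) (μ : Multiset ℕ) :
    C (((j ::ₘ μ).count j : ℕ) : F) * partWeight (j ::ₘ μ) = X j * partWeight μ := by
  have hcount : ((μ.count j + 1 : ℕ) : F) ≠ 0 := Nat.cast_ne_zero.2 (Nat.succ_ne_zero _)
  rw [partWeight, partWeight, countFactorial_cons, Multiset.count_cons_self, Multiset.map_cons,
    Multiset.prod_cons, ← mul_assoc, ← map_mul, Nat.cast_mul, mul_inv,
    mul_inv_cancel_left₀ hcount]
  ring

theorem sum_count_mul_partWeight {n j : ℕ} (hj : 1 ≤ j) (hjn : j ≤ n)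
    (G : Multiset ℕ → MvPolynomial ℕ F) :
    ∑ μ ∈ partitionsFinset n, C ((μ.count j : ℕ) : F) * (G μ * partWeight μ) =
      ∑ ν ∈ partitionsFinset (n - j), G (j ::ₘ ν) * (X j * partWeight ν) := by
  rw [← sum_filter_of_ne (p := (j ∈ ·)) fun μ _ h => by_contra fun hjμ => h (by
      rw [Multiset.count_eq_zero.2 hjμ, Nat.cast_zero, map_zero, zero_mul]),
    ← image_cons_partitionsFinset hj hjn,
    sum_image fun _ _ _ _ h => Multiset.cons_inj_right j |>.1 h]
  refine sum_congr rfl fun ν _ => ?_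
  rw [mul_left_comm, count_mul_partWeight_cons]

theorem sum_count_mul_pochMonomial (d : F) {n j : ℕ} (hj : 1 ≤ j) (hjn : j ≤ n) :
    ∑ μ ∈ partitionsFinset n, C ((μ.count j : ℕ) : F) * (pochMonomial d n μ * partWeight μ) =
      ∑ ν ∈ partitionsFinset (n - j), C (d - Multiset.card ν) *
        (X 0 ^ (j - 1) * X j * pochMonomial d (n - j) ν * partWeight ν) := by
  rw [sum_count_mul_partWeight hj hjn]
  refine sum_congr rfl fun ν hν => ?_
  have hcard := card_le_of_mem_partitionsFinset hν
  rw [pochMonomial_cons, pochMonomial, show n - (Multiset.card ν + 1) =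
    (j - 1) + (n - j - Multiset.card ν) by omega, pow_add, map_mul]
  ring

theorem sum_count_mul_eq_twoPartSum (d : F) {n i j : ℕ} (hi : 1 ≤ i) (hj : 1 ≤ j) (hjn : j ≤ n) :
    ∑ ν ∈ partitionsFinset (n - j), C ((ν.count i : ℕ) : F) *
      (X 0 ^ (j - 1) * X j * pochMonomial d (n - j) ν * partWeight ν) = twoPartSum d n i j := by
  rw [twoPartSum]
  split_ifs with hij
  · rw [sum_count_mul_partWeight hi (by omega), Nat.sub_sub, add_comm j i]
    refine sum_congr rfl fun σ hσ => ?_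
    have hcard := card_le_of_mem_partitionsFinset hσ
    rw [pochMonomial_cons, pochMonomial_cons, show n - 1 - (Multiset.card σ + 1) =
      (j - 1) + (n - j - (Multiset.card σ + 1)) by omega, pow_add]
    ring
  · refine sum_eq_zero fun ν hν => ?_
    have hiν : i ∉ ν := fun h => hij (by have := le_of_mem_partitionsFinset hν h; omega)
    rw [Multiset.count_eq_zero.2 hiν, Nat.cast_zero, map_zero, zero_mul]

/-- The sum vanishes because, after removing a second part `i`, it becomes
`∑ᵢ ∑ⱼ (i - j) · twoPartSum d n i j` with `twoPartSum` symmetric in `i, j`. -/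
theorem sum_sum_pochMonomial_eq_zero (d : F) (n : ℕ) :
    ∑ j ∈ Icc 1 n, ∑ ν ∈ partitionsFinset (n - j), C ((n : F) - j - j * Multiset.card ν) *
      (X 0 ^ (j - 1) * X j * pochMonomial d (n - j) ν * partWeight ν) = 0 := by
  rw [← sum_sum_sub_mul_eq_zero (Icc 1 n) (fun i => C (i : F)) (twoPartSum d n)
    (twoPartSum_comm d n)]
  refine sum_congr rfl fun j hj => ?_
  obtain ⟨hj1, hjn⟩ := mem_Icc.1 hj
  rw [eq_comm, sum_congr rfl fun i hi => by
    rw [← sum_count_mul_eq_twoPartSum d (mem_Icc.1 hi).1 hj1 hjn, mul_sum], sum_comm]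
  refine sum_congr rfl fun ν hν => ?_
  obtain ⟨-, hsum⟩ := mem_partitionsFinset.1 hν
  have hcoeff : ∑ i ∈ Icc 1 n, ν.count i • ((i : F) - j) = n - j - j * Multiset.card ν := by
    rw [sum_Icc_count_smul hν (Nat.sub_le n j)]
    simp only [Multiset.sum_map_sub, ← Nat.cast_multiset_sum, hsum, Nat.cast_sub hjn,
      Multiset.map_const', Multiset.sum_replicate, nsmul_eq_mul]
    ring
  rw [← hcoeff, map_sum, sum_mul, eq_comm]
  refine sum_congr rfl fun i _ => ?_
  rw [nsmul_eq_mul, map_mul, map_sub, map_natCast, map_natCast, map_natCast]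
  ring

theorem natCast_mul_potentialPoly (d : F) (n : ℕ) :
    C (n : F) * potentialPoly d n =
      ∑ j ∈ Icc 1 n, C ((d + 1) * j - n) * (X 0 ^ (j - 1) * X j * potentialPoly d (n - j)) := by
  have hsplit : C (n : F) * potentialPoly d n = ∑ j ∈ Icc 1 n, C (j : F) *
      ∑ μ ∈ partitionsFinset n, C ((μ.count j : ℕ) : F) * (pochMonomial d n μ * partWeight μ) := by
    simp_rw [potentialPoly, mul_sum]
    rw [sum_comm]
    refine sum_congr rfl fun μ hμ => ?_
    have hn : ∑ j ∈ Icc 1 n, μ.count j • (j : F) = n := by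
      rw [sum_Icc_count_smul hμ le_rfl, ← Nat.cast_multiset_sum, (mem_partitionsFinset.1 hμ).2]
    rw [← hn, map_sum, sum_mul]
    refine sum_congr rfl fun j _ => ?_
    rw [nsmul_eq_mul, map_mul, mul_comm (C _), mul_assoc]
  rw [hsplit, ← sub_eq_zero, ← sum_sub_distrib, ← sum_sum_pochMonomial_eq_zero d n]
  refine sum_congr rfl fun j hj => ?_
  obtain ⟨hj1, hjn⟩ := mem_Icc.1 hj
  rw [sum_count_mul_pochMonomial d hj1 hjn, potentialPoly, mul_sum, mul_sum, mul_sum,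
    ← sum_sub_distrib]
  refine sum_congr rfl fun ν _ => ?_
  simp only [map_sub, map_mul, map_natCast, map_add, map_one]
  ring

theorem natCast_succ_mul_potentialPoly_succ (d : F) (n : ℕ) :
    C ((n + 1 : ℕ) : F) * potentialPoly d (n + 1) =
      ∑ i ∈ range (n + 1), C ((d + 1) * (i + 1 : ℕ) - (n + 1 : ℕ)) *
        (X 0 ^ i * X (i + 1) * potentialPoly d (n - i)) := by
  rw [natCast_mul_potentialPoly, ← Ico_add_one_right_eq_Icc, ← zero_add 1, ← sum_Ico_add',
    ← range_eq_Ico]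
  refine sum_congr rfl fun i _ => ?_
  simp

theorem Ppoly_eq_sum_potentialPoly (c : F) {m K : ℕ} (hK : K ≤ m) :
    Ppoly F c m (K + 1) =
      C c * ∑ i ∈ range (K + 1), X 0 ^ i * X (m + 1 + i) * potentialPoly (c - 1) (K - i) := by
  rw [Ppoly_eq_sum_partitionsFinset, sum_filter]
  calc _ = ∑ μ ∈ partitionsFinset (m + (K + 1)), ∑ i ∈ range (K + 1),
        C ((μ.count (m + 1 + i) : ℕ) : F) * (pochMonomial c (K + 1) μ * partWeight μ) := by
        refine sum_congr rfl fun μ hμ => ?_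
        rw [← sum_mul, ← map_sum, ← Nat.cast_sum, sum_range_count_eq_ite (by omega) hμ]
        split_ifs <;> simp
    _ = ∑ i ∈ range (K + 1), ∑ ν ∈ partitionsFinset (K - i),
        pochMonomial c (K + 1) ((m + 1 + i) ::ₘ ν) * (X (m + 1 + i) * partWeight ν) := by
        rw [sum_comm]
        refine sum_congr rfl fun i hi => ?_
        have hiK := mem_range.1 hi
        rw [sum_count_mul_partWeight (by omega) (by omega),
          show m + (K + 1) - (m + 1 + i) = K - i by omega]
    _ = _ := by
        rw [mul_sum]
        refine sum_congr rfl fun i hi => ?_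
        have hiK := mem_range.1 hi
        rw [potentialPoly, mul_sum, mul_sum]
        refine sum_congr rfl fun ν hν => ?_
        have hcard := card_le_of_mem_partitionsFinset hν
        rw [pochMonomial_cons, pochMonomial, descPochhammer_eval_mul_sub,
          show K + 1 - (Multiset.card ν + 1) = i + (K - i - Multiset.card ν) by omega, pow_add,
          map_mul]
        ring

end PotentialPoly

section Determinant

variable {F : Type*} [Field F]

theorem Aent_succ_succ (lam : F) (k r s : ℕ) :
    Aent lam (k + 1) (r + 1) (s + 1) = Aent lam k r s := by
  simp only [Aent, Nat.add_sub_add_right, Nat.add_le_add_iff_right]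

def consRowA (lam : F) (k : ℕ) (φ : ℕ → MvPolynomial ℕ F) :
    Matrix (Fin k) (Fin k) (MvPolynomial ℕ F) :=
  Matrix.of fun r s => if (r : ℕ) = 0 then φ s else Aent lam k r (s + 1)

/-- The determinant of `A(λ, n+1)` with its first column deleted. -/
def detAMinor (lam : F) (n : ℕ) : MvPolynomial ℕ F :=
  (consRowA lam n fun s => Aent lam (n + 1) 1 (s + 2)).det

theorem consRowA_succ_apply_succ (lam : F) (n : ℕ) (φ : ℕ → MvPolynomial ℕ F)
    (r s : Fin n) :
    consRowA lam (n + 1) φ r.succ s.succ = Aent lam (n + 1) ((r : ℕ) + 1) ((s : ℕ) + 2) := by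
  simp [consRowA]

theorem consRowA_apply_eq_Aent_succ (lam : F) (n : ℕ) (ψ : ℕ → MvPolynomial ℕ F) (r s : Fin n) :
    consRowA lam n ψ r s =
      if (r : ℕ) = 0 then ψ s else Aent lam (n + 1) ((r : ℕ) + 1) ((s : ℕ) + 2) := by
  rw [Aent_succ_succ]; rfl

theorem det_consRowA_succ (lam : F) (n : ℕ) (φ : ℕ → MvPolynomial ℕ F) :
    (consRowA lam (n + 1) φ).det =
      φ 0 * detAMinor lam n -
        C ((n : F) * lam) * X 0 * (consRowA lam n fun s => φ (s + 1)).det := by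
  rcases n with _ | n
  · simp [detAMinor, consRowA]
  have hminor₀ : (consRowA lam (n + 2) φ).submatrix (Fin.succAbove 0) Fin.succ =
      consRowA lam (n + 1) fun s => Aent lam (n + 2) 1 (s + 2) := by
    ext r s
    rw [Matrix.submatrix_apply, Fin.succAbove_zero, consRowA_succ_apply_succ,
      consRowA_apply_eq_Aent_succ]
    split_ifs with hr <;> simp [hr]
  have hminor₁ : (consRowA lam (n + 2) φ).submatrix (Fin.succAbove 1) Fin.succ =
      consRowA lam (n + 1) fun s => φ (s + 1) := by
    ext r s
    refine Fin.cases ?_ (fun r => ?_) r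
    · simp [consRowA]
    · rw [Matrix.submatrix_apply, Fin.one_succAbove_succ, consRowA_succ_apply_succ,
        consRowA_apply_eq_Aent_succ]
      simp
  rw [Matrix.det_succ_column_zero, Fin.sum_univ_succ, Fin.sum_univ_succ,
    sum_eq_zero fun (i : Fin n) _ => by simp [consRowA, Aent], add_zero, Fin.succ_zero_eq_one,
    hminor₀, hminor₁]
  simp [consRowA, Aent, detAMinor]
  ring

theorem det_consRowA_succ_eq_sum (lam : F) (n : ℕ) (φ : ℕ → MvPolynomial ℕ F) :
    (consRowA lam (n + 1) φ).det = ∑ i ∈ range (n + 1),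
      C ((-lam) ^ i * n.descFactorial i) * (X 0 ^ i * φ i * detAMinor lam (n - i)) := by
  induction n generalizing φ with
  | zero =>
    rw [det_consRowA_succ]
    simp
  | succ n ih =>
    rw [det_consRowA_succ, ih, sum_range_succ' _ (n + 1), mul_sum, sub_eq_add_neg,
      ← sum_neg_distrib, add_comm]
    congr 1
    · refine sum_congr rfl fun i _ => ?_
      rw [Nat.succ_descFactorial_succ, Nat.add_sub_add_right]
      simp only [map_mul, map_pow, map_neg, map_natCast, Nat.cast_mul, Nat.cast_add_one, pow_succ]
      ring
    · simp

theorem det_consRowA_succ_eq_sum_potentialPoly (lam : F) {n : ℕ}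
    (hW : ∀ i ≤ n,
      detAMinor lam i = C (i.factorial * (-lam) ^ i) * potentialPoly (-lam⁻¹ - 1) i)
    (φ : ℕ → MvPolynomial ℕ F) :
    (consRowA lam (n + 1) φ).det = C (n.factorial * (-lam) ^ n) *
      ∑ i ∈ range (n + 1), X 0 ^ i * φ i * potentialPoly (-lam⁻¹ - 1) (n - i) := by
  rw [det_consRowA_succ_eq_sum, mul_sum]
  refine sum_congr rfl fun i hi => ?_
  have hin : i ≤ n := Nat.lt_succ_iff.1 (mem_range.1 hi)
  have hpow : (-lam) ^ n = (-lam) ^ i * (-lam) ^ (n - i) := by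
    rw [← pow_add, Nat.add_sub_cancel' hin]
  rw [hW _ (Nat.sub_le n i), hpow, ← Nat.factorial_mul_descFactorial hin]
  simp only [map_mul, map_pow, map_natCast, Nat.cast_mul]
  ring

theorem detAMinor_eq_potentialPoly [CharZero F] {lam : F} (hlam : lam ≠ 0) (n : ℕ) :
    detAMinor lam n = C (n.factorial * (-lam) ^ n) * potentialPoly (-lam⁻¹ - 1) n := by
  induction n using Nat.strong_induction_on with
  | _ n ih =>
  rcases n with _ | n
  · simp [detAMinor, potentialPoly_zero]
  have hentry : ∀ i : ℕ, Aent lam (n + 2) 1 (i + 2) =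
      C (-lam) * C (-lam⁻¹ * (i + 1 : ℕ) - (n + 1 : ℕ)) * X (i + 1) := by
    intro i
    rw [Aent, if_pos (by omega), ← map_mul]
    congr 2
    field_simp
    push_cast
    ring
  have hsum : ∑ i ∈ range (n + 1),
        X 0 ^ i * Aent lam (n + 2) 1 (i + 2) * potentialPoly (-lam⁻¹ - 1) (n - i) =
      C (-lam) * (C ((n + 1 : ℕ) : F) * potentialPoly (-lam⁻¹ - 1) (n + 1)) := by
    rw [natCast_succ_mul_potentialPoly_succ, sub_add_cancel, mul_sum]
    refine sum_congr rfl fun i _ => ?_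
    rw [hentry]
    ring
  rw [detAMinor, det_consRowA_succ_eq_sum_potentialPoly lam fun i hi => ih i (by omega), hsum,
    ← mul_assoc, ← mul_assoc, ← map_mul, ← map_mul, Nat.factorial_succ, pow_succ]
  push_cast
  ring_nf

end Determinant

/-- For a field `f` of characteristic `0`, `λ ≠ 0`, and `m ≥ k−1 ≥ 0`,
`P^{(−1/λ)}_{mk} = (1/((k−1)!·(−λ)^k))·det M`, where `M` has first row
`(x_{m+1}, …, x_{m+k})` and remaining rows the rows of `A(λ,k)`. -/
theorem Ppoly_eq_det (f : Type*) [Field f] [CharZero f] (lam : f) (hlam : lam ≠ 0)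
    (m k : ℕ) (hk : 1 ≤ k) (hm : k - 1 ≤ m) :
    Ppoly f (-lam⁻¹) m k =
      MvPolynomial.C ((((k - 1).factorial : f) * (-lam) ^ k)⁻¹) *
        (Matrix.of fun r s : Fin k =>
          if (r : ℕ) = 0 then MvPolynomial.X (m + 1 + (s : ℕ))
          else Aent lam k (r : ℕ) ((s : ℕ) + 1)).det := by
  obtain ⟨K, rfl⟩ : ∃ K, k = K + 1 := ⟨k - 1, by omega⟩
  have hdet := det_consRowA_succ_eq_sum_potentialPoly (n := K) lam
    (fun i _ => detAMinor_eq_potentialPoly hlam i) fun s => X (m + 1 + s)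
  have hconst :
      ((K.factorial : f) * (-lam) ^ (K + 1))⁻¹ * (K.factorial * (-lam) ^ K) = -lam⁻¹ := by
    have : (K.factorial : f) ≠ 0 := Nat.cast_ne_zero.2 K.factorial_ne_zero
    have : -lam ≠ 0 := neg_ne_zero.2 hlam
    rw [pow_succ, neg_inv]
    field_simp
  change _ = C _ * (consRowA lam (K + 1) fun s => X (m + 1 + s)).det
  rw [Ppoly_eq_sum_potentialPoly _ (by omega), hdet, ← mul_assoc, ← map_mul, Nat.add_sub_cancel,
    hconst]

end
end

section
/- Let m ≥ 0 and k ≥ 1, and let P_{mk} := P^{(1/2)}_{mk} ∈ ℚ[x_0,…,x_{m+k}]. Then the least common multiple of the denominators of the coefficients of P_{mk} (equivalently, the smallest positive integer N such that N·P_{mk} has integer coefficients) equals 2^{2k − s(k)} if m = 0, and equals 2^{2k − s(k−1) − 1} if m ≥ 1, where s(j) denotes the sum of the digits of the binary expansion of j. -/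
/-!
With `ℓ = t + 1` parts and `F = ∏ pᵢ!`, one has
`(1/2)(1/2 - 1)⋯(1/2 - t) = ±(2t)! / (2^(2t+1) t!)` and `(2t)! = C_t (t+1)! t!` (Catalan number),
so the coefficient of the monomial of `π` is `±N / 2^(2t+1)` with `N = C_t · ℓ!/F` an integer of
2-adic valuation `t - v₂(F)`: its denominator is `2^(ℓ + v₂(F))`. Distinct partitions give
distinct monomials, so the lcm is `2` to the maximum of `ℓ + v₂(∏ pᵢ!)` over the partitions
with a part `> m`.

As `∏ pᵢ! ∣ ℓ!` and `ℓ ≤ k`, this is at most `k + v₂(k!)`, attained at `1^k` when `m = 0`.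
When `m ≥ 1`, removing one copy of a part `a > m` of multiplicity `p` gives
`v₂(∏ pᵢ!) ≤ v₂(p) + v₂((ℓ-1)!)`, while the `p` parts of size `a` force `ℓ + p - 1 ≤ k`;
as `v₂(p) < p`, the maximum is `k + v₂((k-1)!)`, attained at `(m+1) 1^(k-1)`.
Legendre's formula `v₂(n!) = n - s(n)` turns these into the stated exponents.
-/

open scoped Classical

noncomputable section

open Finset Nat

lemma catalan_mul_factorial_mul_factorial (t : ℕ) : catalan t * (t + 1)! * t ! = (2 * t)! := by
  have h := choose_mul_factorial_mul_factorial (show t ≤ 2 * t by omega)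
  rw [show 2 * t - t = t by omega, ← centralBinom_eq_two_mul_choose,
    ← succ_mul_catalan_eq_centralBinom] at h
  rw [← h, factorial_succ]
  ring

lemma prod_range_succ_half_sub (t : ℕ) :
    ∏ j ∈ range (t + 1), ((1 / 2 : ℚ) - j) = (-1) ^ t * (2 * t)! / (2 ^ (2 * t + 1) * t !) := by
  induction t with
  | zero => norm_num
  | succ t ih =>
    rw [prod_range_succ, ih, show 2 * (t + 1) = 2 * t + 1 + 1 by ring]
    push_cast [factorial_succ]
    field_simp
    ring

lemma padicValNat_le_of_dvd {p a b : ℕ} [Fact p.Prime] (hb : b ≠ 0) (h : a ∣ b) :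
    padicValNat p a ≤ padicValNat p b :=
  (padicValNat_dvd_iff_le hb).1 (pow_padicValNat_dvd.trans h)

lemma padicValNat_factorial_mono {p a b : ℕ} [Fact p.Prime] (h : a ≤ b) :
    padicValNat p a ! ≤ padicValNat p b ! :=
  padicValNat_le_of_dvd (factorial_ne_zero b) (factorial_dvd_factorial h)

lemma padicValNat_two_factorial_add_digits_sum (n : ℕ) :
    padicValNat 2 n ! + (digits 2 n).sum = n := by
  have := sub_one_mul_padicValNat_factorial (p := 2) n
  have := digit_sum_le 2 n
  omega

lemma Rat.den_natCast_div_prime_pow {p N e : ℕ} [hp : Fact p.Prime] (hN : N ≠ 0)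
    (he : padicValNat p N ≤ e) : ((N : ℚ) / p ^ e).den = p ^ (e - padicValNat p N) := by
  obtain ⟨v, u, hpu, rfl⟩ := exists_eq_pow_mul_and_not_dvd hN p hp.out.ne_one
  have hu : u ≠ 0 := by rintro rfl; simp at hpu
  rw [padicValNat.mul (pow_ne_zero _ hp.out.ne_zero) hu, padicValNat.prime_pow,
    padicValNat.eq_zero_of_not_dvd hpu, add_zero] at he ⊢
  have hq : ((p ^ v * u : ℕ) : ℚ) / p ^ e = ((u : ℤ) : ℚ) / ((p ^ (e - v) : ℤ) : ℚ) := by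
    rw [← Nat.sub_add_cancel he, pow_add]
    push_cast
    field_simp [hp.out.ne_zero]
    simp
  have hcop : Nat.Coprime u (p ^ (e - v)) :=
    Nat.Coprime.pow_right _ (Nat.coprime_comm.mp ((hp.out.coprime_iff_not_dvd).mpr hpu))
  have hden := Rat.den_div_eq_of_coprime (a := u) (b := p ^ (e - v)) (by positivity [hp.out.pos])
    (by simpa [Int.natAbs_pow] using hcop)
  rw [hq]
  exact_mod_cast hden

lemma Rat.den_neg_one_pow_mul (t : ℕ) (q : ℚ) : ((-1) ^ t * q).den = q.den := by
  rcases neg_one_pow_eq_or ℚ t with h | h <;> simp [h]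

lemma Finset.lcm_pow_eq_of_isGreatest {ι : Type*} {s : Finset ι} {f : ι → ℕ} {n : ℕ} (b : ℕ)
    (h : IsGreatest (f '' s) n) : s.lcm (fun i => b ^ f i) = b ^ n := by
  obtain ⟨⟨i, hi, rfl⟩, hle⟩ := h
  exact Nat.dvd_antisymm (lcm_dvd fun j hj => pow_dvd_pow b (hle ⟨j, hj, rfl⟩)) (dvd_lcm hi)

namespace Multiset

lemma count_mul_sub_one_add_card_le_sum {s : Multiset ℕ} (hs : ∀ x ∈ s, 0 < x) (a : ℕ) :
    s.count a * (a - 1) + card s ≤ s.sum := by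
  induction s using Multiset.induction_on with
  | empty => simp
  | cons b s ih =>
    have hb := hs b (mem_cons_self b s)
    have ih := ih fun x hx => hs x (mem_cons_of_mem hx)
    rw [count_cons, card_cons, sum_cons]
    split_ifs with hab
    · subst hab; nlinarith [Nat.sub_add_cancel hb]
    · rw [add_zero]; omega

variable {α : Type*} [DecidableEq α] {I : Finset α}

lemma prod_factorial_count_dvd_factorial_card {s : Multiset α} (hs : ∀ x ∈ s, x ∈ I) :
    ∏ i ∈ I, (s.count i)! ∣ (card s)! := by
  simpa [sum_count_eq_card hs] using Nat.prod_factorial_dvd_factorial_sum I s.count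

lemma prod_factorial_count_cons {a : α} (ha : a ∈ I) (s : Multiset α) :
    ∏ i ∈ I, ((a ::ₘ s).count i)! = (s.count a + 1) * ∏ i ∈ I, (s.count i)! := by
  rw [← mul_prod_erase I _ ha, ← mul_prod_erase I _ ha, count_cons_self, factorial_succ,
    mul_assoc]
  congr 2
  exact prod_congr rfl fun i hi => by rw [count_cons_of_ne (ne_of_mem_erase hi)]

lemma prod_factorial_count_replicate {a : α} (ha : a ∈ I) (n : ℕ) :
    ∏ i ∈ I, ((replicate n a).count i)! = n ! := by
  rw [prod_eq_single_of_mem a ha fun i _ hi => by simp [count_replicate, Ne.symm hi],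
    count_replicate_self]

end Multiset

namespace Nat.Partition

variable {n : ℕ} (π : n.Partition)

lemma mem_Icc_of_mem_parts {i : ℕ} (hi : i ∈ π.parts) : i ∈ Icc 1 n :=
  mem_Icc.2 ⟨π.parts_pos hi, π.le_of_mem_parts hi⟩

lemma count_mul_sub_one_add_card_parts_le (a : ℕ) :
    π.parts.count a * (a - 1) + Multiset.card π.parts ≤ n := by
  simpa [π.parts_sum] using Multiset.count_mul_sub_one_add_card_le_sum (fun _ => π.parts_pos) a

end Nat.Partition

def denExpHalf {n : ℕ} (π : n.Partition) : ℕ :=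
  Multiset.card π.parts + padicValNat 2 (∏ i ∈ Icc 1 n, (π.parts.count i)!)

lemma den_partMultCoeff_half {n : ℕ} (π : n.Partition) :
    (partMultCoeff (1 / 2 : ℚ) π).den = 2 ^ denExpHalf π := by
  set F := ∏ i ∈ Icc 1 n, (π.parts.count i)! with hF_def
  have hF0 : F ≠ 0 := prod_ne_zero_iff.2 fun _ _ => factorial_ne_zero _
  obtain ⟨M, hM⟩ : F ∣ (Multiset.card π.parts)! :=
    Multiset.prod_factorial_count_dvd_factorial_card fun _ => π.mem_Icc_of_mem_parts
  have hFQ : ∏ i ∈ Icc 1 n, ((π.parts.count i)! : ℚ) = F := by push_cast [hF_def]; rfl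
  rw [partMultCoeff, denExpHalf, hFQ, ← hF_def]
  cases h : Multiset.card π.parts with
  | zero =>
    rw [h, factorial_zero] at hM
    simp [Nat.eq_one_of_mul_eq_one_right hM.symm]
  | succ t =>
    rw [h] at hM
    set N := catalan t * M
    have hN : N * F * t ! = (2 * t)! := by
      rw [← catalan_mul_factorial_mul_factorial, hM]; ring
    have hN0 : N ≠ 0 := by rintro h0; simp [h0] at hN; exact factorial_ne_zero _ hN.symm
    have hv : padicValNat 2 N + padicValNat 2 F = t := by
      have := congrArg (padicValNat 2) hN
      rw [padicValNat.mul (by positivity) (factorial_ne_zero t), padicValNat.mul hN0 hF0,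
        padicValNat_factorial_mul] at this
      omega
    have hcoeff : (∏ j ∈ range (t + 1), ((1 / 2 : ℚ) - j)) / F =
        (-1) ^ t * ((N : ℚ) / ((2 : ℕ) : ℚ) ^ (2 * t + 1)) := by
      rw [prod_range_succ_half_sub, ← hN]
      push_cast
      field_simp
    rw [hcoeff, Rat.den_neg_one_pow_mul, Rat.den_natCast_div_prime_pow hN0 (by omega)]
    congr 1
    omega

lemma partMultCoeff_half_ne_zero {n : ℕ} (π : n.Partition) : partMultCoeff (1 / 2 : ℚ) π ≠ 0 := by
  refine div_ne_zero (prod_ne_zero_iff.2 fun j _ h => ?_)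
    (prod_ne_zero_iff.2 fun _ _ => by positivity)
  have h2 : ((1 : ℕ) : ℚ) = ((2 * j : ℕ) : ℚ) := by push_cast; linarith
  have := Nat.cast_injective h2
  omega

lemma denExpHalf_le {n : ℕ} (π : n.Partition) : denExpHalf π ≤ n + padicValNat 2 n ! := by
  have hcard := π.count_mul_sub_one_add_card_parts_le 0
  have hdvd := Multiset.prod_factorial_count_dvd_factorial_card fun _ => π.mem_Icc_of_mem_parts
  have := padicValNat_le_of_dvd (p := 2) (factorial_ne_zero _) hdvd
  have := padicValNat_factorial_mono (p := 2) (le_of_add_le_right hcard)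
  unfold denExpHalf
  omega

lemma denExpHalf_le_of_mem_parts {m k a : ℕ} (hm : 1 ≤ m) (π : (m + k).Partition)
    (ha : a ∈ π.parts) (hma : m < a) : denExpHalf π ≤ k + padicValNat 2 (k - 1)! := by
  obtain ⟨r, hr⟩ := Multiset.exists_cons_of_mem ha
  have hr_mem : ∀ x ∈ r, x ∈ Icc 1 (m + k) := fun x hx =>
    π.mem_Icc_of_mem_parts (hr ▸ Multiset.mem_cons_of_mem hx)
  have hF : ∏ i ∈ Icc 1 (m + k), (π.parts.count i)! =
      (r.count a + 1) * ∏ i ∈ Icc 1 (m + k), (r.count i)! := by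
    rw [hr, Multiset.prod_factorial_count_cons (π.mem_Icc_of_mem_parts ha)]
  have hcard : Multiset.card r + r.count a + 1 ≤ k := by
    have h := π.count_mul_sub_one_add_card_parts_le a
    rw [hr, Multiset.count_cons_self, Multiset.card_cons] at h
    have := Nat.mul_le_mul_left (r.count a + 1) (show m ≤ a - 1 by omega)
    nlinarith
  have hvp : padicValNat 2 (r.count a + 1) < r.count a + 1 :=
    (padicValNat_le_nat_log _).trans_lt (log_lt_self 2 (by omega))
  have hvr := padicValNat_le_of_dvd (p := 2) (factorial_ne_zero _)
    (Multiset.prod_factorial_count_dvd_factorial_card hr_mem)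
  have hmono := padicValNat_factorial_mono (p := 2) (show Multiset.card r ≤ k - 1 by omega)
  rw [denExpHalf, hF,
    padicValNat.mul (by omega) (prod_ne_zero_iff.2 fun _ _ => factorial_ne_zero _),
    hr, Multiset.card_cons]
  omega

def bigPartPartitions (m k : ℕ) : Finset (m + k).Partition :=
  univ.filter fun π => ∃ a ∈ π.parts, m < a

lemma isGreatest_denExpHalf_zero {k : ℕ} (hk : 1 ≤ k) :
    IsGreatest (denExpHalf '' (bigPartPartitions 0 k : Set (0 + k).Partition))
      (k + padicValNat 2 k !) := by
  let ones : (0 + k).Partition :=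
    ⟨Multiset.replicate k 1, fun hi => by rw [Multiset.eq_of_mem_replicate hi]; omega, by simp⟩
  refine ⟨⟨ones, ?_, ?_⟩, ?_⟩
  · simpa [bigPartPartitions, ones] using ⟨1, Multiset.mem_replicate.2 ⟨by omega, rfl⟩, one_pos⟩
  · rw [denExpHalf, Multiset.prod_factorial_count_replicate (by simp; omega)]
    simp [ones]
  · rintro _ ⟨π, -, rfl⟩
    simpa using denExpHalf_le π

lemma isGreatest_denExpHalf_of_one_le {m k : ℕ} (hm : 1 ≤ m) (hk : 1 ≤ k) :
    IsGreatest (denExpHalf '' (bigPartPartitions m k : Set (m + k).Partition))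
      (k + padicValNat 2 (k - 1)!) := by
  let hook : (m + k).Partition :=
    ⟨(m + 1) ::ₘ Multiset.replicate (k - 1) 1,
      fun hi => by
        rcases Multiset.mem_cons.1 hi with rfl | hi
        · omega
        · rw [Multiset.eq_of_mem_replicate hi]; omega,
      by simp; omega⟩
  refine ⟨⟨hook, ?_, ?_⟩, ?_⟩
  · simp [bigPartPartitions, hook]
  · rw [denExpHalf, Multiset.prod_factorial_count_cons (by simp; omega),
      Multiset.prod_factorial_count_replicate (by simp; omega)]
    simp [hook, Multiset.count_replicate, show m ≠ 0 by omega]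
    omega
  · rintro _ ⟨π, hπ, rfl⟩
    obtain ⟨a, ha, hma⟩ := (mem_filter.1 hπ).2
    exact denExpHalf_le_of_mem_parts hm π ha hma

def partExponent (m k : ℕ) (π : (m + k).Partition) : ℕ →₀ ℕ :=
  Finsupp.single 0 (k - Multiset.card π.parts) +
    ∑ i ∈ Icc 1 (m + k), Finsupp.single i (π.parts.count i)

lemma partExponent_apply_of_pos {m k i : ℕ} (π : (m + k).Partition) (hi : 0 < i) :
    partExponent m k π i = π.parts.count i := by
  simp only [partExponent, Finsupp.add_apply, Finsupp.single_apply, Finsupp.finsetSum_apply,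
    sum_ite_eq', if_neg hi.ne, zero_add]
  split_ifs with h
  · rfl
  · exact (Multiset.count_eq_zero.2 fun hmem => h (π.mem_Icc_of_mem_parts hmem)).symm

lemma partExponent_injective (m k : ℕ) : Function.Injective (partExponent m k) := by
  intro π π' h
  ext i
  rcases i.eq_zero_or_pos with rfl | hi
  · rw [Multiset.count_eq_zero.2 fun h => (π.parts_pos h).false,
      Multiset.count_eq_zero.2 fun h => (π'.parts_pos h).false]
  · rw [← partExponent_apply_of_pos π hi, ← partExponent_apply_of_pos π' hi, h]

section Ppoly

open MvPolynomial

variable {f : Type*} [Field f] {c : f} {m k : ℕ}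

lemma Ppoly_eq_sum_monomial :
    Ppoly f c m k =
      ∑ π ∈ bigPartPartitions m k, monomial (partExponent m k π) (partMultCoeff c π) := by
  refine sum_congr rfl fun π _ => ?_
  rw [C_mul_X_pow_eq_monomial]
  simp_rw [X_pow_eq_monomial]
  rw [← monomial_sum_one, monomial_mul, mul_one, partExponent]

lemma coeff_Ppoly_partExponent {π : (m + k).Partition} (hπ : π ∈ bigPartPartitions m k) :
    (Ppoly f c m k).coeff (partExponent m k π) = partMultCoeff c π := by
  rw [Ppoly_eq_sum_monomial, coeff_sum, sum_eq_single π
    (fun π' _ hne => by rw [coeff_monomial, if_neg ((partExponent_injective m k).ne hne)])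
    (fun h => absurd hπ h), coeff_monomial, if_pos rfl]

lemma support_Ppoly (hc : ∀ π : (m + k).Partition, partMultCoeff c π ≠ 0) :
    (Ppoly f c m k).support = (bigPartPartitions m k).image (partExponent m k) := by
  refine subset_antisymm ?_ fun d hd => ?_
  · rw [Ppoly_eq_sum_monomial]
    exact support_sum.trans <| biUnion_subset.2 fun π hπ =>
      support_monomial_subset.trans <| singleton_subset_iff.2 <| mem_image_of_mem _ hπ
  · obtain ⟨π, hπ, rfl⟩ := mem_image.1 hd
    rw [mem_support_iff, coeff_Ppoly_partExponent hπ]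
    exact hc π

end Ppoly

lemma lcm_den_coeff_Ppoly {c : ℚ} {m k : ℕ}
    (hc : ∀ π : (m + k).Partition, partMultCoeff c π ≠ 0) :
    (Ppoly ℚ c m k).support.lcm (fun d => ((Ppoly ℚ c m k).coeff d).den) =
      (bigPartPartitions m k).lcm fun π => (partMultCoeff c π).den := by
  rw [support_Ppoly hc, lcm_image]
  exact lcm_congr rfl fun π hπ => by simp [coeff_Ppoly_partExponent hπ]

/-- The least common multiple of the denominators of the coefficients of
`P_{mk} = P^{(1/2)}_{mk}` equals `2^(2k − s(k))` if `m = 0`, and `2^(2k − s(k−1) − 1)` if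
`m ≥ 1`, where `s(j)` is the sum of the binary digits of `j`. -/
theorem lcm_den_Ppoly_half (m k : ℕ) (hk : 1 ≤ k) :
    (m = 0 →
      (Ppoly ℚ (1/2 : ℚ) m k).support.lcm
          (fun d => ((Ppoly ℚ (1/2 : ℚ) m k).coeff d).den) =
        2 ^ (2 * k - (Nat.digits 2 k).sum)) ∧
    (1 ≤ m →
      (Ppoly ℚ (1/2 : ℚ) m k).support.lcm
          (fun d => ((Ppoly ℚ (1/2 : ℚ) m k).coeff d).den) =
        2 ^ (2 * k - (Nat.digits 2 (k - 1)).sum - 1)) := by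
  have hlcm : ∀ E, IsGreatest (denExpHalf '' (bigPartPartitions m k : Set (m + k).Partition)) E →
      (Ppoly ℚ (1/2 : ℚ) m k).support.lcm (fun d => ((Ppoly ℚ (1/2 : ℚ) m k).coeff d).den) =
        2 ^ E := by
    intro E hE
    simp only [lcm_den_coeff_Ppoly partMultCoeff_half_ne_zero, den_partMultCoeff_half]
    exact Finset.lcm_pow_eq_of_isGreatest 2 hE
  refine ⟨fun hm => ?_, fun hm => ?_⟩
  · subst hm
    rw [hlcm _ (isGreatest_denExpHalf_zero hk)]
    have := padicValNat_two_factorial_add_digits_sum k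
    congr 1
    omega
  · rw [hlcm _ (isGreatest_denExpHalf_of_one_le hm hk)]
    have := padicValNat_two_factorial_add_digits_sum (k - 1)
    congr 1
    omega

end
end

section
/- Let m ≥ 0, let n ≥ 2m+2 be even, and set k = n/2 − m. Let Q ∈ ℚ[y_{m+1}, …, y_n] be the polynomial obtained from P_{mk}(x_0,…,x_{m+k}) by the substitution x_j ↦ y_{n−j} for j = 0, …, m+k (so Q = P_{mk}(y_n, y_{n−1}, …, y_{n/2})). Then for every integer i with m+1 ≤ i ≤ n, the polynomial identity Σ_j (j−i)·y_{i+j}·∂Q/∂y_j = 0 holds, where the sum runs over all j with m+1 ≤ j ≤ n and i+j ≤ n. (This expresses that Q is an invariant of the coadjoint action of the Lie algebra L_{m+1,n+1} on the polynomial functions on its dual.) -/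
open scoped Classical

noncomputable section

/-!
Write `N = m + k` and `D_i = Σ_j (j - i) y_{i+j} ∂/∂y_j`. The term of `Q` indexed by a partition
`π` of `N` is a multiple of `y_n^{k-ℓ(π)} ∏_{a ∈ π} y_{n-a}`, and `D_i` sends `y_{n-a}` to
`(n - a - i) y_{n-(a-i)}` if `a ≥ i` and to `0` otherwise: it lowers one part `a ≥ i` by `i`,
dropping it when `a = i` (the new variable is then `y_n`, which absorbs the change of `ℓ`).
Grouping the results by the new partition `π'` of `N - i`, which comes either from a part `b` of
`π'` raised to `b + i` or from `b = 0`, the generalized multinomial coefficients add up to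
`(c (n - 2i) - (N - i)) · (c choose π')`, and this vanishes for `c = 1/2`, `n = 2N`.
Partitions whose parts are all `≤ m < i` are killed by `D_i`, and every raised partition has the
part `b + i > m`, so the restriction to partitions with a part `> m` survives the regrouping.
-/

open MvPolynomial Finset

namespace Multiset

theorem add_sum_erase_of_eq_zero_or_mem {b : ℕ} {P : Multiset ℕ} (hb : b = 0 ∨ b ∈ P) :
    b + (P.erase b).sum = P.sum := by
  rcases hb with rfl | hb
  · rw [zero_add]
    by_cases h0 : 0 ∈ P
    · rw [← sum_erase h0, zero_add]
    · rw [erase_of_notMem h0]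
  · exact sum_erase hb

theorem filter_ne_zero_cons {b : ℕ} {E : Multiset ℕ} (hE : 0 ∉ E) :
    (b ::ₘ E).filter (· ≠ 0) = if b = 0 then E else b ::ₘ E := by
  rw [filter_cons, filter_eq_self.2 fun x hx => ne_of_mem_of_not_mem hx hE]
  split_ifs <;> simp_all

theorem erase_filter_ne_zero_cons (b : ℕ) {E : Multiset ℕ} (hE : 0 ∉ E) :
    ((b ::ₘ E).filter (· ≠ 0)).erase b = E := by
  rw [filter_ne_zero_cons hE]
  split_ifs with hb
  · exact hb ▸ erase_of_notMem hE
  · exact erase_cons_head b E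

theorem filter_ne_zero_cons_erase {b : ℕ} {P : Multiset ℕ} (hP : 0 ∉ P) (hb : b = 0 ∨ b ∈ P) :
    (b ::ₘ P.erase b).filter (· ≠ 0) = P := by
  rw [filter_ne_zero_cons fun h => hP (mem_of_mem_erase h)]
  split_ifs with h
  · exact h ▸ erase_of_notMem hP
  · exact cons_erase (hb.resolve_left h)

end Multiset

namespace Nat.Partition

theorem zero_notMem_parts {w : ℕ} (π : w.Partition) : 0 ∉ π.parts :=
  fun h => (π.parts_pos h).false

theorem card_parts_le {w : ℕ} (π : w.Partition) : Multiset.card π.parts ≤ w := by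
  simpa [π.parts_sum] using Multiset.card_nsmul_le_sum (a := 1) fun x hx => π.parts_pos hx

theorem prod_toFinset_eq_prod_Icc {M : Type*} [CommMonoid M] {w : ℕ} (π : w.Partition)
    (g : ℕ → ℕ → M) (hg : ∀ x, g x 0 = 1) :
    ∏ x ∈ π.parts.toFinset, g x (π.parts.count x) = ∏ x ∈ Icc 1 w, g x (π.parts.count x) := by
  refine prod_subset (fun x hx => ?_) fun x _ hx => ?_
  · rw [Multiset.mem_toFinset] at hx
    exact mem_Icc.2 ⟨π.parts_pos hx, π.le_of_mem_parts hx⟩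
  · rw [Multiset.count_eq_zero_of_notMem (by simpa using hx), hg]

theorem sum_sum_parts_ge_eq_sum_sum_insert_zero {β : Type*} [AddCommMonoid β] {N i : ℕ}
    (hi : 0 < i) (hiN : i ≤ N) (G : Multiset ℕ → ℕ → β) :
    ∑ π : N.Partition, ∑ a ∈ π.parts.toFinset with i ≤ a, G π.parts a =
      ∑ π : (N - i).Partition, ∑ b ∈ insert 0 π.parts.toFinset,
        G ((b + i) ::ₘ π.parts.erase b) (b + i) := by
  rw [sum_sigma', sum_sigma']
  have zero_notMem_erase {w : ℕ} (π : w.Partition) (a : ℕ) : 0 ∉ π.parts.erase a :=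
    fun h => π.zero_notMem_parts (Multiset.mem_of_mem_erase h)
  refine sum_bij'
    (fun p hp => ⟨ofSums (N - i) ((p.2 - i) ::ₘ p.1.parts.erase p.2) ?_, p.2 - i⟩)
    (fun p hp => ⟨ofSums N ((p.2 + i) ::ₘ p.1.parts.erase p.2) ?_, p.2 + i⟩) ?_ ?_ ?_ ?_ ?_
  · simp only [mem_sigma, mem_univ, true_and, mem_filter, Multiset.mem_toFinset] at hp
    have := Multiset.sum_erase hp.1
    rw [Multiset.sum_cons, p.1.parts_sum] at *
    omega
  · simp only [mem_sigma, mem_univ, true_and, mem_insert, Multiset.mem_toFinset] at hp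
    have := Multiset.add_sum_erase_of_eq_zero_or_mem hp
    rw [Multiset.sum_cons, p.1.parts_sum] at *
    omega
  · rintro ⟨π, a⟩ hp
    simp only [mem_sigma, mem_univ, true_and, mem_filter, Multiset.mem_toFinset] at hp
    simp only [mem_sigma, mem_univ, true_and, mem_insert, Multiset.mem_toFinset, ofSums_parts,
      Multiset.filter_ne_zero_cons (zero_notMem_erase π a)]
    split_ifs <;> simp_all
  · rintro ⟨π, b⟩ hp
    simp only [mem_sigma, mem_univ, true_and, mem_filter, Multiset.mem_toFinset, ofSums_parts,
      Multiset.filter_ne_zero_cons (zero_notMem_erase π b)]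
    simp [hi.ne']
  · rintro ⟨π, a⟩ hp
    simp only [mem_sigma, mem_univ, true_and, mem_filter, Multiset.mem_toFinset] at hp
    refine Sigma.ext (Nat.Partition.ext ?_) (heq_of_eq (Nat.sub_add_cancel hp.2))
    rw [ofSums_parts, ofSums_parts, Multiset.erase_filter_ne_zero_cons _ (zero_notMem_erase π a),
      Nat.sub_add_cancel hp.2, Multiset.filter_ne_zero_cons_erase π.zero_notMem_parts (.inr hp.1)]
  · rintro ⟨π, b⟩ hp
    simp only [mem_sigma, mem_univ, true_and, mem_insert, Multiset.mem_toFinset] at hp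
    refine Sigma.ext (Nat.Partition.ext ?_) (heq_of_eq (Nat.add_sub_cancel b i))
    rw [ofSums_parts, ofSums_parts, Multiset.filter_ne_zero_cons (zero_notMem_erase π b),
      if_neg (by omega), Multiset.erase_cons_head, Nat.add_sub_cancel,
      Multiset.filter_ne_zero_cons_erase π.zero_notMem_parts hp]
  · rintro ⟨π, a⟩ hp
    simp only [mem_sigma, mem_univ, true_and, mem_filter, Multiset.mem_toFinset] at hp
    rw [ofSums_parts, Multiset.erase_filter_ne_zero_cons _ (zero_notMem_erase π a),
      Nat.sub_add_cancel hp.2, Multiset.cons_erase hp.1]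

end Nat.Partition

theorem MvPolynomial.pderiv_multiset_prod_X {R σ : Type*} [CommSemiring R] [DecidableEq σ] (j : σ)
    (V : Multiset σ) :
    pderiv j ((V.map X).prod : MvPolynomial σ R) = V.count j • ((V.erase j).map X).prod := by
  induction V using Multiset.induction_on with
  | empty => simp
  | cons v V ih =>
    rw [Multiset.map_cons, Multiset.prod_cons, Derivation.leibniz, ih, pderiv_X]
    by_cases hv : v = j
    · subst hv
      rw [Multiset.count_cons_self, Multiset.erase_cons_head, succ_nsmul, Pi.single_eq_same,
        smul_eq_mul, smul_eq_mul, mul_one]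
      by_cases hvV : v ∈ V
      · rw [mul_smul_comm, Multiset.prod_map_erase hvV]
      · simp [Multiset.count_eq_zero_of_notMem hvV]
    · rw [Multiset.count_cons_of_ne (Ne.symm hv), Multiset.erase_cons_tail V hv,
        Multiset.map_cons, Multiset.prod_cons, Pi.single_eq_of_ne hv, smul_zero, add_zero,
        smul_eq_mul, mul_smul_comm]

namespace Ppoly

variable {F : Type*} [Field F]

def multinomialDenom (M : Multiset ℕ) : F := ∏ x ∈ M.toFinset, ((M.count x).factorial : F)

def genMultinomial (c : F) (M : Multiset ℕ) : F :=
  (∏ j ∈ range (Multiset.card M), (c - j)) / multinomialDenom M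

theorem partMultCoeff_eq_genMultinomial (c : F) {w : ℕ} (π : w.Partition) :
    partMultCoeff c π = genMultinomial c π.parts :=
  congrArg _ (π.prod_toFinset_eq_prod_Icc (fun _ e => (e.factorial : F)) fun _ => by simp).symm

theorem multinomialDenom_cons (a : ℕ) (L : Multiset ℕ) :
    (multinomialDenom (a ::ₘ L) : F) = (L.count a + 1) * multinomialDenom L := by
  have hL : multinomialDenom L = ∏ x ∈ insert a L.toFinset, ((L.count x).factorial : F) := by
    by_cases ha : a ∈ L.toFinset
    · rw [insert_eq_of_mem ha, multinomialDenom]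
    · rw [prod_insert ha, Multiset.count_eq_zero_of_notMem (by simpa using ha), multinomialDenom]
      simp
  rw [hL, multinomialDenom, Multiset.toFinset_cons, ← mul_prod_erase _ _ (mem_insert_self a _),
    ← mul_prod_erase _ _ (mem_insert_self a _), Multiset.count_cons_self,
    prod_congr rfl fun x hx => by rw [Multiset.count_cons_of_ne (ne_of_mem_erase hx)]]
  push_cast [Nat.factorial_succ]
  ring

theorem genMultinomial_cons_mul_count [CharZero F] (c : F) (a : ℕ) (L : Multiset ℕ) :
    genMultinomial c (a ::ₘ L) * (a ::ₘ L).count a =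
      (∏ j ∈ range (Multiset.card L + 1), (c - j)) / multinomialDenom L := by
  have : multinomialDenom L ≠ (0 : F) :=
    prod_ne_zero_iff.2 fun _ _ => Nat.cast_ne_zero.2 (Nat.factorial_ne_zero _)
  have : (L.count a : F) + 1 ≠ 0 := Nat.cast_add_one_ne_zero _
  rw [genMultinomial, multinomialDenom_cons, Multiset.card_cons, Multiset.count_cons_self]
  push_cast
  field_simp

theorem sum_genMultinomial_cons_erase [CharZero F] (c x : F) (f : ℕ → ℕ) {M : Multiset ℕ}
    (hM : 0 ∉ M) :
    ∑ b ∈ insert 0 M.toFinset,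
        genMultinomial c (f b ::ₘ M.erase b) * (f b ::ₘ M.erase b).count (f b) * (x - b) =
      genMultinomial c M * (c * x - M.sum) := by
  have hmem : ∀ b ∈ M, genMultinomial c (f b ::ₘ M.erase b) * (f b ::ₘ M.erase b).count (f b) =
      genMultinomial c M * M.count b := fun b hb => by
    conv_rhs => rw [← Multiset.cons_erase hb]
    rw [genMultinomial_cons_mul_count, genMultinomial_cons_mul_count]
  have hzero : genMultinomial c (f 0 ::ₘ M.erase 0) * (f 0 ::ₘ M.erase 0).count (f 0) =
      genMultinomial c M * (c - Multiset.card M) := by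
    rw [genMultinomial_cons_mul_count, Multiset.erase_of_notMem hM, genMultinomial,
      prod_range_succ, div_mul_eq_mul_div, mul_comm]
  rw [sum_insert (by simpa using hM), hzero,
    sum_congr rfl fun b hb => by rw [hmem b (Multiset.mem_toFinset.1 hb)]]
  have hcard : ∑ b ∈ M.toFinset, (M.count b : F) = Multiset.card M := by
    exact_mod_cast Multiset.toFinset_sum_count_eq M
  have hsum : ∑ b ∈ M.toFinset, (M.count b : F) * b = M.sum := by
    simpa using congrArg (Nat.cast : ℕ → F) (sum_multiset_count M).symm
  simp only [mul_assoc, ← mul_sum, mul_sub, sum_sub_distrib, ← sum_mul, hcard, hsum]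
  ring

def partMonomial (n k : ℕ) (L : Multiset ℕ) : MvPolynomial ℕ F :=
  X n ^ (k - Multiset.card L) * (L.map fun a => X (n - a)).prod

theorem rename_Ppoly (c : F) (m k n : ℕ) :
    rename (n - ·) (Ppoly F c m k) =
      ∑ π : (m + k).Partition with ∃ a ∈ π.parts, m < a,
        C (genMultinomial c π.parts) * partMonomial n k π.parts := by
  rw [Ppoly, map_sum]
  refine sum_congr rfl fun π _ => ?_
  simp only [map_mul, map_pow, map_prod, rename_C, rename_X]
  rw [partMultCoeff_eq_genMultinomial, partMonomial, Nat.sub_zero, mul_assoc,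
    ← π.prod_toFinset_eq_prod_Icc (fun x e => X (n - x) ^ e) fun _ => pow_zero _,
    ← prod_multiset_map_count]

theorem partMonomial_cons_erase (n : ℕ) {k b : ℕ} {P : Multiset ℕ} (hP : 0 ∉ P)
    (hk : Multiset.card P < k) (hb : b = 0 ∨ b ∈ P) :
    (partMonomial n k (b ::ₘ P.erase b) : MvPolynomial ℕ F) = partMonomial n k P := by
  rcases hb with rfl | hb
  · rw [Multiset.erase_of_notMem hP, partMonomial, partMonomial, Multiset.card_cons,
      Multiset.map_cons, Multiset.prod_cons, Nat.sub_zero, ← mul_assoc, ← pow_succ,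
      show k - (Multiset.card P + 1) + 1 = k - Multiset.card P by omega]
  · rw [Multiset.cons_erase hb]

def coadjointOp (m n i : ℕ) : MvPolynomial ℕ F →ₗ[F] MvPolynomial ℕ F :=
  ∑ j ∈ Icc (m + 1) n with i + j ≤ n,
    LinearMap.mulLeft F (C ((j : F) - i) * X (i + j)) ∘ₗ (pderiv j).toLinearMap

theorem coadjointOp_apply (m n i : ℕ) (p : MvPolynomial ℕ F) :
    coadjointOp m n i p =
      ∑ j ∈ Icc (m + 1) n with i + j ≤ n, C ((j : F) - i) * X (i + j) * pderiv j p := by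
  simp [coadjointOp, mul_assoc]

theorem pderiv_partMonomial {n j : ℕ} (k : ℕ) (hj : j ≠ n) (L : Multiset ℕ) :
    pderiv j (partMonomial n k L : MvPolynomial ℕ F) =
      X n ^ (k - Multiset.card L) *
        ((L.map (n - ·)).count j • (((L.map (n - ·)).erase j).map X).prod) := by
  rw [partMonomial, show (L.map fun a => X (n - a)) = (L.map (n - ·)).map X from
    (Multiset.map_map X (n - ·) L).symm, Derivation.leibniz, Derivation.leibniz_pow,
    pderiv_X_of_ne hj.symm, pderiv_multiset_prod_X]
  simp

theorem coadjointOp_C_mul_partMonomial {m n i : ℕ} (x : F) (k : ℕ) (hi : 0 < i) {L : Multiset ℕ}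
    (hL : ∀ a ∈ L, a + m + 1 ≤ n) :
    coadjointOp m n i (C x * partMonomial n k L) =
      ∑ a ∈ L.toFinset with i ≤ a,
        C (x * L.count a * ((n : F) - a - i)) * partMonomial n k ((a - i) ::ₘ L.erase a) := by
  have hinj : Set.InjOn (n - ·) {a | a ∈ L} := fun a ha b hb h => by
    have := hL a ha; have := hL b hb; simp only at h; omega
  have himage : (L.toFinset.filter (i ≤ ·)).image (n - ·) ⊆
      (Icc (m + 1) n).filter (i + · ≤ n) := by
    intro j hj
    simp only [mem_image, mem_filter, Multiset.mem_toFinset] at hj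
    obtain ⟨a, ⟨ha, hia⟩, rfl⟩ := hj
    have := hL a ha
    simp only [mem_filter, mem_Icc]
    omega
  rw [C_mul', map_smul, coadjointOp_apply, ← sum_subset himage,
    sum_image fun a ha b hb h => ?inj, smul_sum]
  · refine sum_congr rfl fun a ha => ?_
    simp only [mem_filter, Multiset.mem_toFinset] at ha
    have := hL a ha.1
    rw [pderiv_partMonomial k (by omega), Multiset.count_map_eq_count _ _ hinj _ ha.1,
      ← Multiset.map_erase_of_mem _ _ ha.1, partMonomial, Multiset.card_cons,
      Multiset.card_erase_add_one ha.1, Multiset.map_cons, Multiset.prod_cons, Multiset.map_map,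
      Nat.cast_sub (by omega : a ≤ n), show i + (n - a) = n - (a - i) by omega]
    simp only [Function.comp_def, nsmul_eq_mul, smul_eq_C_mul, map_mul, map_natCast]
    ring
  · exact hinj (Multiset.mem_toFinset.1 (mem_filter.1 ha).1)
      (Multiset.mem_toFinset.1 (mem_filter.1 hb).1) h
  · intro j hj hj_notMem
    simp only [mem_filter, mem_Icc] at hj
    rw [pderiv_partMonomial k (by omega), Multiset.count_eq_zero_of_notMem, zero_smul, mul_zero,
      mul_zero]
    intro hjV
    obtain ⟨a, ha, rfl⟩ := Multiset.mem_map.1 hjV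
    have := hL a ha
    exact hj_notMem (mem_image_of_mem _ (mem_filter.2 ⟨Multiset.mem_toFinset.2 ha, by omega⟩))

theorem coadjointOp_rename_Ppoly [CharZero F] (c : F) {m k n i : ℕ} (hmi : m < i)
    (hik : i ≤ m + k) (hn : 2 * m + k < n) :
    coadjointOp m n i (rename (n - ·) (Ppoly F c m k)) =
      ∑ π : (m + k - i).Partition,
        C (genMultinomial c π.parts * (c * (n - 2 * i) - (m + k - i : ℕ))) *
          partMonomial n k π.parts := by
  rw [rename_Ppoly, map_sum, sum_congr rfl fun π _ =>
      coadjointOp_C_mul_partMonomial _ k (by omega) fun a ha => by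
        have := π.le_of_mem_parts ha
        omega,
    sum_filter_of_ne fun π _ hπ => ?nonzero,
    Nat.Partition.sum_sum_parts_ge_eq_sum_sum_insert_zero (by omega) hik fun M a =>
      C (genMultinomial c M * M.count a * ((n : F) - a - i)) *
        partMonomial n k ((a - i) ::ₘ M.erase a)]
  case nonzero =>
    obtain ⟨a, ha, -⟩ := exists_ne_zero_of_sum_ne_zero hπ
    simp only [mem_filter, Multiset.mem_toFinset] at ha
    exact ⟨a, ha.1, by omega⟩
  refine sum_congr rfl fun π _ => ?_
  have hcard : Multiset.card π.parts < k := by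
    have := π.card_parts_le
    omega
  rw [sum_congr rfl fun b hb => by
    rw [Nat.add_sub_cancel, Multiset.erase_cons_head, partMonomial_cons_erase n
      π.zero_notMem_parts hcard (by simpa using hb)], ← sum_mul, ← map_sum]
  have hx (b : ℕ) : (n : F) - ↑(b + i) - i = (n - 2 * i) - b := by push_cast; ring
  simp_rw [hx]
  rw [sum_genMultinomial_cons_erase (f := (· + i)) _ _ π.zero_notMem_parts, π.parts_sum]

theorem coadjointOp_rename_Ppoly_of_lt (c : F) {m k n i : ℕ} (hki : m + k < i)
    (hn : 2 * m + k < n) :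
    coadjointOp m n i (rename (n - ·) (Ppoly F c m k)) = 0 := by
  rw [rename_Ppoly, map_sum]
  refine sum_eq_zero fun π _ => ?_
  rw [coadjointOp_C_mul_partMonomial _ k (by omega) fun a ha => by
    have := π.le_of_mem_parts ha
    omega]
  refine sum_eq_zero fun a ha => ?_
  simp only [mem_filter, Multiset.mem_toFinset] at ha
  exact absurd (π.le_of_mem_parts ha.1) (by omega)

end Ppoly

/-- Let `Q = P_{mk}(yₙ, y_{n−1}, …, y_{n/2})` be obtained from
`P_{mk} = P^{(1/2)}_{mk}` by the substitution `x_j ↦ y_{n−j}`.  Then for every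
`m+1 ≤ i ≤ n`, `Σ_j (j−i)·y_{i+j}·∂Q/∂y_j = 0`, the sum over `m+1 ≤ j ≤ n` with
`i+j ≤ n`: `Q` is an invariant of the coadjoint action of `L_{m+1,n+1}`. -/
theorem renamed_Ppoly_invariant (m k n : ℕ) (hk : 1 ≤ k) (hn : n = 2 * (m + k)) :
    ∀ i : ℕ, m + 1 ≤ i → i ≤ n →
      ∑ j ∈ (Finset.Icc (m + 1) n).filter (fun j => i + j ≤ n),
        MvPolynomial.C ((j : ℚ) - (i : ℚ)) * MvPolynomial.X (i + j) *
          MvPolynomial.pderiv j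
            (MvPolynomial.rename (fun j => n - j) (Ppoly ℚ (1/2 : ℚ) m k)) = 0 := by
  intro i hi _
  rw [← Ppoly.coadjointOp_apply]
  rcases le_or_gt i (m + k) with hik | hki
  · have hcoeff : (1 / 2 : ℚ) * (n - 2 * i) - (m + k - i : ℕ) = 0 := by
      rw [Nat.cast_sub hik, hn]
      push_cast
      ring
    rw [Ppoly.coadjointOp_rename_Ppoly _ (by omega) hik (by omega)]
    exact sum_eq_zero fun π _ => by rw [hcoeff, mul_zero, map_zero, zero_mul]
  · exact Ppoly.coadjointOp_rename_Ppoly_of_lt _ hki (by omega)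
end
end
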